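/- arXiv:2107.08224 — 3 statements merged into one kernel-verified Lean document; each statement's English description precedes it below -/
import Mathlib

section
/- Let f(c,x) = 4x(1−cx)/(1+4(1−c)x). Then for every c ∈ [0,1]: if 0 ≤ x ≤ 3/4 one has f(0,x) ≤ f(c,x) ≤ f(1,x), and if 3/4 ≤ x ≤ 1 one has f(1,x) ≤ f(c,x) ≤ f(0,x). -/
noncomputable def f (c x : ℝ) : ℝ := 4 * x * (1 - c * x) / (1 + 4 * (1 - c) * x)

theorem f_monotonicity_in_c (c x : ℝ) (hc : c ∈ Set.Icc (0:ℝ) 1) :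
    (0 ≤ x → x ≤ 3/4 → f 0 x ≤ f c x ∧ f c x ≤ f 1 x) ∧
    (3/4 ≤ x → x ≤ 1 → f 1 x ≤ f c x ∧ f c x ≤ f 0 x) := by
  obtain ⟨hc0, hc1⟩ := hc
  constructor
  · intro hx0 hx34
    have hdc : (0:ℝ) < 1 + 4 * (1 - c) * x := by nlinarith
    have hd0 : (0:ℝ) < 1 + 4 * (1 - (0:ℝ)) * x := by nlinarith
    have hd1 : (0:ℝ) < 1 + 4 * (1 - (1:ℝ)) * x := by norm_num
    constructor
    · unfold f
      rw [div_le_div_iff₀ hd0 hdc]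
      nlinarith [sq_nonneg x, mul_nonneg (mul_nonneg hc0 (mul_nonneg hx0 hx0)) (by linarith : (0:ℝ) ≤ 3 - 4*x)]
    · unfold f
      rw [div_le_div_iff₀ hdc hd1]
      nlinarith [mul_nonneg (mul_nonneg (by linarith : (0:ℝ) ≤ 1 - c) (mul_nonneg hx0 hx0)) (by linarith : (0:ℝ) ≤ 3 - 4*x)]
  · intro hx34 hx1
    have hx0 : (0:ℝ) ≤ x := by linarith
    have hdc : (0:ℝ) < 1 + 4 * (1 - c) * x := by nlinarith
    have hd0 : (0:ℝ) < 1 + 4 * (1 - (0:ℝ)) * x := by nlinarith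
    have hd1 : (0:ℝ) < 1 + 4 * (1 - (1:ℝ)) * x := by norm_num
    constructor
    · unfold f
      rw [div_le_div_iff₀ hd1 hdc]
      nlinarith [mul_nonneg (mul_nonneg (by linarith : (0:ℝ) ≤ 1 - c) (mul_nonneg hx0 hx0)) (by linarith : (0:ℝ) ≤ 4*x - 3)]
    · unfold f
      rw [div_le_div_iff₀ hdc hd0]
      nlinarith [mul_nonneg (mul_nonneg hc0 (mul_nonneg hx0 hx0)) (by linarith : (0:ℝ) ≤ 4*x - 3)]
end

section
/- Let c ∈ (5/6, 1] and set u_{2,±} = (−5+10c ± √5·√(5−16c+12c²)) / (8(2c²−c)). Then 5−16c+12c² ≥ 0, 2c²−c > 0, and f(c, u_{2,+}) = u_{2,−} and f(c, u_{2,−}) = u_{2,+}, where f(c,x) = 4x(1−cx)/(1+4(1−c)x); in particular u_{2,+} and u_{2,−} form a periodic orbit of period 2: f(c, f(c, u_{2,±})) = u_{2,±}. -/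
/-!
Write `s = √5 · √(5 - 16c + 12c²)`, so `s² = 5(5 - 16c + 12c²)`. Clearing denominators,
`f c ((10c - 5 + s) / (8(2c² - c))) = (10c - 5 - s) / (8(2c² - c))` becomes a polynomial identity
that holds modulo `s² = 5(5 - 16c + 12c²)`, hence for either sign of `s`: `f` swaps the two
points. Clearing denominators is legitimate because `(10c - 5)² - s² = 20c(2c - 1) > 0`, so both
points are nonnegative, and there the denominator `1 + 4(1 - c)x` of `f` is positive.
-/

lemma f_denom_pos {c x : ℝ} (hc : c ≤ 1) (hx : 0 ≤ x) : 0 < 1 + 4 * (1 - c) * x := by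
  have := mul_nonneg (sub_nonneg.2 hc) hx
  linarith

lemma f_swap {c s : ℝ} (hc : 2 * c ^ 2 - c ≠ 0) (hs : s ^ 2 = 5 * (5 - 16 * c + 12 * c ^ 2))
    (hden : 1 + 4 * (1 - c) * ((-5 + 10 * c + s) / (8 * (2 * c ^ 2 - c))) ≠ 0) :
    f c ((-5 + 10 * c + s) / (8 * (2 * c ^ 2 - c))) = (-5 + 10 * c - s) / (8 * (2 * c ^ 2 - c)) := by
  have hc0 : c ≠ 0 := by rintro rfl; simp at hc
  have hc1 : c * 2 - 1 ≠ 0 := fun h => hc (by linear_combination c * h)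
  rw [f, div_eq_iff hden]
  field_simp
  linear_combination (4 - 8 * c) * hs

theorem period_two_orbit (c : ℝ) (hc : c ∈ Set.Ioc (5/6 : ℝ) 1) :
    0 ≤ 5 - 16 * c + 12 * c ^ 2 ∧ 0 < 2 * c ^ 2 - c ∧
    f c ((-5 + 10 * c + Real.sqrt 5 * Real.sqrt (5 - 16 * c + 12 * c ^ 2)) /
          (8 * (2 * c ^ 2 - c)))
      = (-5 + 10 * c - Real.sqrt 5 * Real.sqrt (5 - 16 * c + 12 * c ^ 2)) /
          (8 * (2 * c ^ 2 - c)) ∧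
    f c ((-5 + 10 * c - Real.sqrt 5 * Real.sqrt (5 - 16 * c + 12 * c ^ 2)) /
          (8 * (2 * c ^ 2 - c)))
      = (-5 + 10 * c + Real.sqrt 5 * Real.sqrt (5 - 16 * c + 12 * c ^ 2)) /
          (8 * (2 * c ^ 2 - c)) ∧
    f c (f c ((-5 + 10 * c + Real.sqrt 5 * Real.sqrt (5 - 16 * c + 12 * c ^ 2)) /
          (8 * (2 * c ^ 2 - c))))
      = (-5 + 10 * c + Real.sqrt 5 * Real.sqrt (5 - 16 * c + 12 * c ^ 2)) /
          (8 * (2 * c ^ 2 - c)) ∧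
    f c (f c ((-5 + 10 * c - Real.sqrt 5 * Real.sqrt (5 - 16 * c + 12 * c ^ 2)) /
          (8 * (2 * c ^ 2 - c))))
      = (-5 + 10 * c - Real.sqrt 5 * Real.sqrt (5 - 16 * c + 12 * c ^ 2)) /
          (8 * (2 * c ^ 2 - c)) := by
  obtain ⟨hc_gt, hc_le⟩ := hc
  have hdisc : 0 ≤ 5 - 16 * c + 12 * c ^ 2 := by nlinarith
  have ha : 0 < 2 * c ^ 2 - c := by nlinarith
  set s := Real.sqrt 5 * Real.sqrt (5 - 16 * c + 12 * c ^ 2) with hs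
  have hs_nonneg : 0 ≤ s := by positivity
  have hs_sq : s ^ 2 = 5 * (5 - 16 * c + 12 * c ^ 2) := by
    rw [hs, mul_pow, Real.sq_sqrt (by norm_num), Real.sq_sqrt hdisc]
  have hs_le : s ≤ 10 * c - 5 := by nlinarith
  have hpoint {t : ℝ} (ht : |t| ≤ 10 * c - 5) : 0 ≤ (-5 + 10 * c + t) / (8 * (2 * c ^ 2 - c)) :=
    div_nonneg (by linarith [neg_abs_le t]) (by positivity)
  have hplus := f_swap ha.ne' hs_sq (f_denom_pos hc_le (hpoint (by rwa [abs_of_nonneg hs_nonneg]))).ne'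
  have hminus := f_swap (s := -s) ha.ne' (by rwa [neg_sq])
    (f_denom_pos hc_le (hpoint (by rwa [abs_neg, abs_of_nonneg hs_nonneg]))).ne'
  rw [← sub_eq_add_neg, sub_neg_eq_add] at hminus
  exact ⟨hdisc, ha, hplus, hminus, by rw [hplus, hminus], by rw [hminus, hplus]⟩
end

section
/- Let c ∈ (5/6, 1] and let u_{2,±} = (−5+10c ± √5·√(5−16c+12c²)) / (8(2c²−c)) be the period-2 points of f(c,·), where f(c,x) = 4x(1−cx)/(1+4(1−c)x). Then the derivative with respect to x of the second iterate x ↦ f(c, f(c, x)), evaluated at x = u_{2,+} (equivalently at x = u_{2,−}), equals (63c²−84c+25)/(3c²−4c). -/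
theorem HasDerivAt.comp_self_of_apply_eq {𝕜 : Type*} [NontriviallyNormedField 𝕜] {g : 𝕜 → 𝕜}
    {u v a b : 𝕜} (hu : HasDerivAt g a u) (hv : HasDerivAt g b v) (huv : g u = v) :
    HasDerivAt (fun x => g (g x)) (b * a) u := by
  rw [← huv] at hv
  exact hv.comp u hu

theorem hasDerivAt_f {c x : ℝ} (hx : 1 + 4 * (1 - c) * x ≠ 0) :
    HasDerivAt (f c)
      (4 * (1 - 2 * c * x - 4 * c * (1 - c) * x ^ 2) / (1 + 4 * (1 - c) * x) ^ 2) x := by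
  have hnum :=
    ((hasDerivAt_id' x).const_mul 4).fun_mul (((hasDerivAt_id' x).const_mul c).const_sub 1)
  have hden := ((hasDerivAt_id' x).const_mul (4 * (1 - c))).const_add 1
  exact (hnum.fun_div hden hx).congr_deriv (by ring)

section Vieta

variable {c u v : ℝ} (hS : 4 * c * (u + v) = 5) (hP : 4 * (2 * c - 1) * (u * v) = u + v)
include hS hP

theorem f_eq_of_vieta (hu : 1 + 4 * (1 - c) * u ≠ 0) : f c u = v := by
  rw [f, div_eq_iff hu]
  linear_combination (-u) * hS + hP

theorem pos_of_vieta (hc : 1 / 2 < c) : 0 < u := by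
  have hsum : 0 < u + v := by nlinarith
  have hprod : 0 < u * v := by nlinarith
  rcases pos_and_pos_or_neg_and_neg_of_mul_pos hprod with ⟨hu, -⟩ | ⟨hu, hv⟩
  · exact hu
  · linarith

theorem denom_mul_denom_of_vieta :
    (2 * c - 1) * ((1 + 4 * (1 - c) * u) * (1 + 4 * (1 - c) * v)) = 4 - 3 * c := by
  linear_combination 4 * (1 - c) ^ 2 * hP + (1 - c) * hS

theorem numer_mul_numer_of_vieta :
    16 * c * (2 * c - 1) ^ 2 *
        ((1 - 2 * c * u - 4 * c * (1 - c) * u ^ 2) * (1 - 2 * c * v - 4 * c * (1 - c) * v ^ 2)) =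
      (63 * c ^ 2 - 84 * c + 25) * (3 * c - 4) := by
  grind

theorem deriv_mul_deriv_of_vieta (h2c : 2 * c - 1 ≠ 0) (hc : 3 * c ^ 2 - 4 * c ≠ 0)
    (hu : 1 + 4 * (1 - c) * u ≠ 0) (hv : 1 + 4 * (1 - c) * v ≠ 0) :
    4 * (1 - 2 * c * v - 4 * c * (1 - c) * v ^ 2) / (1 + 4 * (1 - c) * v) ^ 2 *
        (4 * (1 - 2 * c * u - 4 * c * (1 - c) * u ^ 2) / (1 + 4 * (1 - c) * u) ^ 2) =
      (63 * c ^ 2 - 84 * c + 25) / (3 * c ^ 2 - 4 * c) := by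
  rw [div_mul_div_comm, div_eq_div_iff (by positivity) hc]
  -- after scaling by (2c - 1)², the denominator is the square of `denom_mul_denom_of_vieta`
  refine mul_left_cancel₀ (pow_ne_zero 2 h2c) ?_
  linear_combination (3 * c - 4) * numer_mul_numer_of_vieta hS hP -
    (63 * c ^ 2 - 84 * c + 25) *
      ((2 * c - 1) * ((1 + 4 * (1 - c) * u) * (1 + 4 * (1 - c) * v)) + 4 - 3 * c) *
      denom_mul_denom_of_vieta hS hP

theorem hasDerivAt_f_f_of_vieta (hc : 1 / 2 < c) (hc1 : c ≤ 1) :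
    HasDerivAt (fun x => f c (f c x)) ((63 * c ^ 2 - 84 * c + 25) / (3 * c ^ 2 - 4 * c)) u := by
  have hu := pos_of_vieta hS hP hc
  have hv := pos_of_vieta (u := v) (v := u) (by linear_combination hS) (by linear_combination hP) hc
  have hDu : 1 + 4 * (1 - c) * u ≠ 0 := by nlinarith
  have hDv : 1 + 4 * (1 - c) * v ≠ 0 := by nlinarith
  rw [← deriv_mul_deriv_of_vieta hS hP (by linarith) (by nlinarith) hDu hDv]
  exact (hasDerivAt_f hDu).comp_self_of_apply_eq (hasDerivAt_f hDv) (f_eq_of_vieta hS hP hDu)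

end Vieta

noncomputable def periodTwoPoint (c s : ℝ) : ℝ := (-5 + 10 * c + s) / (8 * (2 * c ^ 2 - c))

section PeriodTwoPoint

variable {c s : ℝ} (hc : c ≠ 0) (h2c : 2 * c - 1 ≠ 0)
include hc h2c

theorem periodTwoPoint_denom_ne_zero : 8 * (2 * c ^ 2 - c) ≠ 0 := by
  rw [show 8 * (2 * c ^ 2 - c) = 8 * c * (2 * c - 1) by ring]
  positivity

theorem periodTwoPoint_mul_denom (t : ℝ) :
    periodTwoPoint c t * (8 * (2 * c ^ 2 - c)) = -5 + 10 * c + t :=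
  div_mul_cancel₀ _ (periodTwoPoint_denom_ne_zero hc h2c)

theorem periodTwoPoint_add_neg :
    4 * c * (periodTwoPoint c s + periodTwoPoint c (-s)) = 5 := by
  refine mul_right_cancel₀ (periodTwoPoint_denom_ne_zero hc h2c) ?_
  linear_combination 4 * c * periodTwoPoint_mul_denom hc h2c s +
    4 * c * periodTwoPoint_mul_denom hc h2c (-s)

theorem periodTwoPoint_mul_neg (hs : s ^ 2 = 5 * (5 - 16 * c + 12 * c ^ 2)) :
    4 * (2 * c - 1) * (periodTwoPoint c s * periodTwoPoint c (-s)) =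
      periodTwoPoint c s + periodTwoPoint c (-s) := by
  set d := 8 * (2 * c ^ 2 - c)
  refine mul_right_cancel₀ (pow_ne_zero 2 (periodTwoPoint_denom_ne_zero hc h2c)) ?_
  linear_combination
    (4 * (2 * c - 1) * (periodTwoPoint c (-s) * d) - d) * periodTwoPoint_mul_denom hc h2c s +
    (4 * (2 * c - 1) * (-5 + 10 * c + s) - d) * periodTwoPoint_mul_denom hc h2c (-s) -
    4 * (2 * c - 1) * hs

end PeriodTwoPoint

theorem second_iterate_deriv_at_period_two (c : ℝ) (hc : c ∈ Set.Ioc (5/6 : ℝ) 1) :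
    HasDerivAt (fun x : ℝ => f c (f c x))
      ((63 * c ^ 2 - 84 * c + 25) / (3 * c ^ 2 - 4 * c))
      ((-5 + 10 * c + Real.sqrt 5 * Real.sqrt (5 - 16 * c + 12 * c ^ 2)) /
        (8 * (2 * c ^ 2 - c))) ∧
    HasDerivAt (fun x : ℝ => f c (f c x))
      ((63 * c ^ 2 - 84 * c + 25) / (3 * c ^ 2 - 4 * c))
      ((-5 + 10 * c - Real.sqrt 5 * Real.sqrt (5 - 16 * c + 12 * c ^ 2)) /
        (8 * (2 * c ^ 2 - c))) := by
  obtain ⟨hc56, hc1⟩ := hc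
  set s := Real.sqrt 5 * Real.sqrt (5 - 16 * c + 12 * c ^ 2)
  -- the discriminant 5 - 16c + 12c² = (2c - 1)(6c - 5) is nonnegative exactly for c ≥ 5/6
  have hs : s ^ 2 = 5 * (5 - 16 * c + 12 * c ^ 2) := by
    rw [mul_pow, Real.sq_sqrt (by norm_num), Real.sq_sqrt (by nlinarith)]
  have hc0 : c ≠ 0 := by linarith
  have h2c : 2 * c - 1 ≠ 0 := by linarith
  have hS := periodTwoPoint_add_neg (s := s) hc0 h2c
  have hP := periodTwoPoint_mul_neg hc0 h2c hs
  have hminus : (-5 + 10 * c - s) / (8 * (2 * c ^ 2 - c)) = periodTwoPoint c (-s) := by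
    rw [periodTwoPoint, sub_eq_add_neg]
  rw [hminus]
  exact ⟨hasDerivAt_f_f_of_vieta hS hP (by linarith) hc1,
    hasDerivAt_f_f_of_vieta (u := periodTwoPoint c (-s)) (v := periodTwoPoint c s)
      (by linear_combination hS) (by linear_combination hP) (by linarith) hc1⟩
end
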